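/- arXiv:math/0405338 — 2 statements merged into one kernel-verified Lean document; each statement's English description precedes it below -/
import Mathlib

section
/- Let ψ: [0,∞) → [0,∞) be concave with ψ(0) = 0, let n ≥ 1, ε > 0, c ≥ 1, and let δ̂ solve δ̂ = n^{−1/2}ψ(√δ̂). Set δ' = max(δ̂, ε) and δ'' = 9c²δ'. Then c(ε + √(δ''·ε) + n^{−1/2}ψ(√δ'')) ≤ δ''. -/
/-- For a concave function on `[0,∞)` with `ψ 0 = 0`, we have `a * ψ b ≤ b * ψ a`
when `0 < a ≤ b`. -/
lemma concave_ratio_le (ψ : ℝ → ℝ) (hconc : ConcaveOn ℝ (Set.Ici 0) ψ)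
    (hψ0 : ψ 0 = 0) {a b : ℝ} (ha : 0 < a) (hab : a ≤ b) :
    a * ψ b ≤ b * ψ a := by
  have hb : 0 < b := lt_of_lt_of_le ha hab
  have h := hconc.2 (show b ∈ Set.Ici (0:ℝ) from hb.le)
    (Set.mem_Ici.mpr le_rfl)
    (show 0 ≤ a / b from (div_pos ha hb).le)
    (show 0 ≤ 1 - a / b from by
      have : a / b ≤ 1 := (div_le_one hb).2 hab
      linarith)
    (by ring)
  simp only [smul_eq_mul, mul_zero, add_zero, hψ0] at h
  have hab' : a / b * b = a := div_mul_cancel₀ a hb.ne'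
  rw [hab'] at h
  have h2 : a / b * ψ b ≤ ψ a := h
  calc a * ψ b = (a / b * b) * ψ b := by rw [hab']
    _ = b * (a / b * ψ b) := by ring
    _ ≤ b * ψ a := by nlinarith [h2]

theorem delta_doubleprime_bound
    (ψ : ℝ → ℝ) (hconc : ConcaveOn ℝ (Set.Ici 0) ψ)
    (hmono : MonotoneOn ψ (Set.Ici 0))
    (hnonneg : ∀ x ≥ (0 : ℝ), 0 ≤ ψ x) (hψ0 : ψ 0 = 0)
    (n : ℕ) (hn : 1 ≤ n) (ε : ℝ) (hε : 0 < ε) (c : ℝ) (hc : 1 ≤ c)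
    (δhat : ℝ) (hδhat : 0 < δhat)
    (hfix : δhat = (Real.sqrt n)⁻¹ * ψ (Real.sqrt δhat))
    (δ' δ'' : ℝ) (hδ' : δ' = max δhat ε) (hδ'' : δ'' = 9 * c ^ 2 * δ') :
    c * (ε + Real.sqrt (δ'' * ε) + (Real.sqrt n)⁻¹ * ψ (Real.sqrt δ'')) ≤ δ'' := by
  have hc0 : 0 < c := lt_of_lt_of_le one_pos hc
  have hδ'pos : 0 < δ' := by rw [hδ']; exact lt_max_of_lt_right hε
  have hδhatδ' : δhat ≤ δ' := by rw [hδ']; exact le_max_left _ _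
  have hεδ' : ε ≤ δ' := by rw [hδ']; exact le_max_right _ _
  have hsqn : (1:ℝ) ≤ Real.sqrt n := by
    rw [show (1:ℝ) = Real.sqrt 1 by simp]
    exact Real.sqrt_le_sqrt (by exact_mod_cast hn)
  have hsqnpos : 0 < Real.sqrt n := lt_of_lt_of_le one_pos hsqn
  -- √δ'' = 3c√δ'
  have hsδ'' : Real.sqrt δ'' = 3 * c * Real.sqrt δ' := by
    rw [hδ'', show 9 * c ^ 2 * δ' = (3*c)^2 * δ' by ring,
      Real.sqrt_mul (by positivity), Real.sqrt_sq (by positivity)]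
  have hsδhat : 0 < Real.sqrt δhat := Real.sqrt_pos.2 hδhat
  have hsδ' : 0 < Real.sqrt δ' := Real.sqrt_pos.2 hδ'pos
  have hψhat : ψ (Real.sqrt δhat) = Real.sqrt n * δhat := by
    field_simp at hfix
    linarith [hfix]
  -- Step A: ψ(√δ') ≤ √n * δ'
  have hA : ψ (Real.sqrt δ') ≤ Real.sqrt n * δ' := by
    have hle : Real.sqrt δhat ≤ Real.sqrt δ' := Real.sqrt_le_sqrt hδhatδ'
    have hk := concave_ratio_le ψ hconc hψ0 hsδhat hle
    rw [hψhat] at hk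
    -- √δhat * ψ(√δ') ≤ √δ' * (√n * δhat)
    have hsq : Real.sqrt δ' * Real.sqrt δhat ≤ δ' := by
      have h1 : Real.sqrt δ' * Real.sqrt δhat ≤ Real.sqrt δ' * Real.sqrt δ' :=
        mul_le_mul_of_nonneg_left hle hsδ'.le
      rw [Real.mul_self_sqrt hδ'pos.le] at h1
      exact h1
    have hδhat_eq : Real.sqrt δhat * Real.sqrt δhat = δhat :=
      Real.mul_self_sqrt hδhat.le
    have key : Real.sqrt δ' * (Real.sqrt n * δhat) ≤
        Real.sqrt δhat * (Real.sqrt n * δ') := by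
      calc Real.sqrt δ' * (Real.sqrt n * δhat)
          = Real.sqrt n * Real.sqrt δhat * (Real.sqrt δ' * Real.sqrt δhat) := by
            conv_lhs => rw [← hδhat_eq]
            ring
        _ ≤ Real.sqrt n * Real.sqrt δhat * δ' :=
            mul_le_mul_of_nonneg_left hsq (by positivity)
        _ = Real.sqrt δhat * (Real.sqrt n * δ') := by ring
    exact le_of_mul_le_mul_left (hk.trans key) hsδhat
  -- Step B: ψ(√δ'') ≤ 3c * ψ(√δ')
  have hB : ψ (Real.sqrt δ'') ≤ 3 * c * ψ (Real.sqrt δ') := by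
    rw [hsδ'']
    have hle : Real.sqrt δ' ≤ 3 * c * Real.sqrt δ' := by nlinarith
    have hk := concave_ratio_le ψ hconc hψ0 hsδ' hle
    have : Real.sqrt δ' * ψ (3 * c * Real.sqrt δ') ≤
        Real.sqrt δ' * (3 * c * ψ (Real.sqrt δ')) := by
      calc Real.sqrt δ' * ψ (3 * c * Real.sqrt δ')
          ≤ 3 * c * Real.sqrt δ' * ψ (Real.sqrt δ') := hk
        _ = Real.sqrt δ' * (3 * c * ψ (Real.sqrt δ')) := by ring
    exact le_of_mul_le_mul_left this hsδ'
  -- bound the sqrt term: √(δ''ε) = 3c√(δ'ε) ≤ 3cδ'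
  have hC : Real.sqrt (δ'' * ε) ≤ 3 * c * δ' := by
    rw [hδ'', show 9 * c ^ 2 * δ' * ε = (3*c)^2 * (δ' * ε) by ring,
      Real.sqrt_mul (by positivity), Real.sqrt_sq (by positivity)]
    have h1 : Real.sqrt (δ' * ε) ≤ Real.sqrt (δ' * δ') :=
      Real.sqrt_le_sqrt (by nlinarith)
    rw [Real.sqrt_mul_self hδ'pos.le] at h1
    nlinarith
  -- bound last term
  have hD : (Real.sqrt n)⁻¹ * ψ (Real.sqrt δ'') ≤ 3 * c * δ' := by
    have h1 : (Real.sqrt n)⁻¹ * ψ (Real.sqrt δ'') ≤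
        (Real.sqrt n)⁻¹ * (3 * c * ψ (Real.sqrt δ')) :=
      mul_le_mul_of_nonneg_left hB (by positivity)
    have h2 : (Real.sqrt n)⁻¹ * ψ (Real.sqrt δ') ≤ δ' := by
      rw [inv_mul_le_iff₀ hsqnpos]
      exact hA
    calc (Real.sqrt n)⁻¹ * ψ (Real.sqrt δ'')
        ≤ (Real.sqrt n)⁻¹ * (3 * c * ψ (Real.sqrt δ')) := h1
      _ = 3 * c * ((Real.sqrt n)⁻¹ * ψ (Real.sqrt δ')) := by ring
      _ ≤ 3 * c * δ' := by nlinarith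
  -- combine
  have e1 : c * ε ≤ c * δ' := mul_le_mul_of_nonneg_left hεδ' hc0.le
  have e2 : c * Real.sqrt (δ'' * ε) ≤ c * (3 * c * δ') :=
    mul_le_mul_of_nonneg_left hC hc0.le
  have e3 : c * ((Real.sqrt n)⁻¹ * ψ (Real.sqrt δ'')) ≤ c * (3 * c * δ') :=
    mul_le_mul_of_nonneg_left hD hc0.le
  nlinarith [e1, e2, e3, hδ'pos, mul_pos hc0 hδ'pos]
end

section
/- Let ψ: [0,∞) → [0,∞) be concave, differentiable, nondecreasing with ψ(0)=0, and let c ≥ 1, ε > 0, n ≥ 1 be constants. Let δ > 0 be the fixed point δ = c(ε + √(δε) + n^{−1/2}ψ(√δ)). Define r_{k+1} = c(ε + √(r_k ε) + n^{−1/2}ψ(√r_k)) and d_k = r_k − δ. If r_k ≥ δ, then d_{k+1} ≤ √(δ · d_k). -/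
private lemma sqrt_add_le' {x y : ℝ} (hx : 0 ≤ x) (hy : 0 ≤ y) :
    Real.sqrt (x + y) ≤ Real.sqrt x + Real.sqrt y := by
  rw [show x + y = x + y from rfl]
  have h : x + y ≤ (Real.sqrt x + Real.sqrt y) ^ 2 := by
    rw [add_sq, Real.sq_sqrt hx, Real.sq_sqrt hy]
    nlinarith [Real.sqrt_nonneg x, Real.sqrt_nonneg y]
  calc Real.sqrt (x + y) ≤ Real.sqrt ((Real.sqrt x + Real.sqrt y) ^ 2) :=
        Real.sqrt_le_sqrt h
    _ = Real.sqrt x + Real.sqrt y := by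
        rw [Real.sqrt_sq (by positivity)]

theorem contraction_step
    (ψ : ℝ → ℝ) (hconc : ConcaveOn ℝ (Set.Ici 0) ψ)
    (hdiff : DifferentiableOn ℝ ψ (Set.Ici 0))
    (hmono : MonotoneOn ψ (Set.Ici 0))
    (hnonneg : ∀ x ≥ (0 : ℝ), 0 ≤ ψ x) (hψ0 : ψ 0 = 0)
    (n : ℕ) (hn : 1 ≤ n) (c ε : ℝ) (hc : 1 ≤ c) (hε : 0 < ε)
    (δ : ℝ) (hδ0 : 0 < δ)
    (hineq : c * ((Real.sqrt n)⁻¹ * ψ (Real.sqrt δ) + Real.sqrt (δ * ε)) ≤ δ)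
    (hfix : δ = c * (ε + Real.sqrt (δ * ε) + (Real.sqrt n)⁻¹ * ψ (Real.sqrt δ)))
    (r rnext : ℝ) (hr : δ ≤ r)
    (hnext : rnext = c * (ε + Real.sqrt (r * ε) + (Real.sqrt n)⁻¹ * ψ (Real.sqrt r))) :
    rnext - δ ≤ Real.sqrt (δ * (r - δ)) := by
  set a := Real.sqrt δ with ha
  set b := Real.sqrt r with hb
  set d := Real.sqrt (r - δ) with hd
  have ha0 : 0 < a := Real.sqrt_pos.mpr hδ0
  have hd0 : 0 ≤ d := Real.sqrt_nonneg _
  have hab : a ≤ b := Real.sqrt_le_sqrt hr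
  have hba : b ≤ a + d := by
    have := sqrt_add_le' hδ0.le (sub_nonneg.mpr hr)
    rwa [add_sub_cancel] at this
  have hψa : 0 ≤ ψ a := hnonneg a ha0.le
  have hinv : 0 ≤ (Real.sqrt (n:ℝ))⁻¹ := by positivity
  have hc0 : 0 < c := lt_of_lt_of_le one_pos hc
  -- concavity bound: ψ b - ψ a ≤ (ψ a / a) * (b - a)
  have hkey : ψ b - ψ a ≤ ψ a / a * (b - a) := by
    rcases eq_or_lt_of_le hab with h | h
    · rw [← h]; simp
    · have hs := hconc.slope_anti_adjacent (x := 0) (y := a) (z := b)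
        (Set.self_mem_Ici) (Set.mem_Ici.mpr (ha0.le.trans hab)) ha0 h
      rw [hψ0, sub_zero, sub_zero] at hs
      have h4 := (div_le_div_iff₀ (by linarith) ha0).mp hs
      rw [div_mul_eq_mul_div, le_div_iff₀ ha0]
      nlinarith
  have hba' : b - a ≤ d := by linarith
  have hψbd : ψ b - ψ a ≤ ψ a / a * d := by
    have : ψ a / a * (b - a) ≤ ψ a / a * d :=
      mul_le_mul_of_nonneg_left hba' (by positivity)
    linarith
  -- sqrt bound: √(rε) - √(δε) ≤ √ε * d
  have hsq : Real.sqrt (r * ε) - Real.sqrt (δ * ε) ≤ Real.sqrt ε * d := by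
    have h1 : Real.sqrt (r * ε) ≤ Real.sqrt (δ * ε) + Real.sqrt ((r - δ) * ε) := by
      have : r * ε = δ * ε + (r - δ) * ε := by ring
      rw [this]
      exact sqrt_add_le' (by positivity) (by nlinarith)
    have h2 : Real.sqrt ((r - δ) * ε) = d * Real.sqrt ε := Real.sqrt_mul (by linarith) ε
    rw [h2] at h1; linarith
  -- subtract fixed point
  have hdiffeq : rnext - δ = c * (Real.sqrt (r * ε) - Real.sqrt (δ * ε))
      + c * (Real.sqrt (n:ℝ))⁻¹ * (ψ b - ψ a) := by
    rw [hnext]; nth_rewrite 1 [hfix]; ring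
  -- divide hineq by a
  have hδa : Real.sqrt (δ * ε) = a * Real.sqrt ε := Real.sqrt_mul hδ0.le ε
  have hcoef : c * ((Real.sqrt (n:ℝ))⁻¹ * (ψ a / a) + Real.sqrt ε) ≤ a := by
    have hδaa : δ = a * a := (Real.mul_self_sqrt hδ0.le).symm
    have := hineq
    rw [hδa, hδaa] at this
    rw [div_eq_mul_inv]
    have h3 : c * ((Real.sqrt (n:ℝ))⁻¹ * (ψ a * a⁻¹) + Real.sqrt ε) * a
        = c * ((Real.sqrt (n:ℝ))⁻¹ * ψ a + a * Real.sqrt ε) := by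
      field_simp
    nlinarith [this]
  have hfin : rnext - δ ≤ a * d := by
    rw [hdiffeq]
    have h1 : c * (Real.sqrt (r * ε) - Real.sqrt (δ * ε)) ≤ c * (Real.sqrt ε * d) :=
      mul_le_mul_of_nonneg_left hsq hc0.le
    have h2 : c * (Real.sqrt (n:ℝ))⁻¹ * (ψ b - ψ a) ≤ c * (Real.sqrt (n:ℝ))⁻¹ * (ψ a / a * d) :=
      mul_le_mul_of_nonneg_left hψbd (by positivity)
    have h3 : c * (Real.sqrt ε * d) + c * (Real.sqrt (n:ℝ))⁻¹ * (ψ a / a * d)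
        = c * ((Real.sqrt (n:ℝ))⁻¹ * (ψ a / a) + Real.sqrt ε) * d := by ring
    nlinarith [mul_le_mul_of_nonneg_right hcoef hd0]
  calc rnext - δ ≤ a * d := hfin
    _ = Real.sqrt (δ * (r - δ)) := (Real.sqrt_mul hδ0.le _).symm
end
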